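/- arXiv:2310.14554 — 5 statements merged into one kernel-verified Lean document; each statement's English description precedes it below -/
import Mathlib

section
/- Let d ≥ 1, let A be a positive semidefinite d×d real matrix, and let x be distributed according to the standard Gaussian measure on ℝ^d. Then the expectation of √(xᵀ A x) is at least √(2·trace(A)/π). -/
/-!
Write `A = Bᴴ B`, so that `xᵀ A x = ∑ₖ ⟨bₖ, x⟩²` for the rows `bₖ` of `B` and `trace A = ∑ₖ ‖bₖ‖²`.
Each `⟨bₖ, x⟩` is a centred Gaussian of variance `‖bₖ‖²`, hence `E |⟨bₖ, x⟩| = √(2/π) ‖bₖ‖`.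
Cauchy–Schwarz with the weights `‖bₖ‖ / (∑ⱼ ‖bⱼ‖²)^{1/2}` bounds `√(∑ₖ ⟨bₖ, x⟩²)` from below by
a linear combination of the `|⟨bₖ, x⟩|`, whose expectation is exactly `√(2 trace A / π)`.
-/

open MeasureTheory ProbabilityTheory Matrix
open scoped NNReal Real

lemma integral_Ioi_mul_exp_neg_mul_sq {b : ℝ} (hb : 0 < b) :
    ∫ x in Set.Ioi (0 : ℝ), x * Real.exp (-b * x ^ 2) = (2 * b)⁻¹ := by
  have h := integral_mul_cexp_neg_mul_sq (b := (b : ℂ)) (by simpa using hb)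
  have hreal : (fun x : ℝ ↦ (x : ℂ) * Complex.exp (-b * x ^ 2))
      = fun x ↦ ((x * Real.exp (-b * x ^ 2) : ℝ) : ℂ) := by
    ext x
    push_cast
    rfl
  rw [hreal, integral_complex_ofReal] at h
  exact_mod_cast h

lemma integral_abs_gaussianReal (v : ℝ≥0) :
    ∫ x, |x| ∂gaussianReal 0 v = √(2 * v / π) := by
  rcases eq_or_ne v 0 with rfl | hv
  · simp
  rw [integral_gaussianReal_eq_integral_smul hv]
  simp only [gaussianPDFReal, sub_zero, smul_eq_mul]
  have hfold := integral_comp_abs (f := fun x : ℝ ↦ x * Real.exp (-(2 * (v : ℝ))⁻¹ * x ^ 2))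
  simp only [sq_abs] at hfold
  calc ∫ x, (√(2 * π * v))⁻¹ * Real.exp (-x ^ 2 / (2 * v)) * |x|
      = (√(2 * π * v))⁻¹ * ∫ x, |x| * Real.exp (-(2 * (v : ℝ))⁻¹ * x ^ 2) := by
        rw [← integral_const_mul]
        congr 1 with x
        rw [neg_div, div_eq_inv_mul, ← neg_mul]
        ring
    _ = √(2 * v / π) := by
      rw [hfold, integral_Ioi_mul_exp_neg_mul_sq (by positivity)]
      have hsq : √(2 * v / π) * √(2 * π * v) = 2 * v := by
        rw [← Real.sqrt_mul (by positivity), show 2 * v / π * (2 * π * v) = (2 * v : ℝ) ^ 2 by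
          field_simp]
        exact Real.sqrt_sq (by positivity)
      field_simp
      linarith

section

variable {ι : Type*} [Fintype ι]

lemma map_dotProduct_pi_gaussianReal (u : ι → ℝ) :
    (Measure.pi fun _ : ι ↦ gaussianReal 0 1).map (u ⬝ᵥ ·) = gaussianReal 0 (u ⬝ᵥ u).toNNReal := by
  let L : StrongDual ℝ (EuclideanSpace ℝ ι) := innerSL ℝ (WithLp.toLp 2 u)
  have hL : (u ⬝ᵥ ·) = L ∘ WithLp.toLp 2 := by
    ext x
    simp [L, EuclideanSpace.inner_toLp_toLp, dotProduct_comm]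
  rw [hL, ← Measure.map_map (by fun_prop) (by fun_prop), map_pi_eq_stdGaussian,
    IsGaussian.map_eq_gaussianReal, integral_strongDual_stdGaussian, variance_dual_stdGaussian,
    innerSL_apply_norm, EuclideanSpace.real_norm_sq_eq]
  simp [dotProduct, sq]

lemma integrable_abs_dotProduct_pi_gaussianReal (u : ι → ℝ) :
    Integrable (fun x ↦ |u ⬝ᵥ x|) (Measure.pi fun _ : ι ↦ gaussianReal 0 1) := by
  have h : Integrable (fun t : ℝ ↦ |t|) (gaussianReal 0 (u ⬝ᵥ u).toNNReal) :=
    IsGaussian.integrable_id.abs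
  rw [← map_dotProduct_pi_gaussianReal] at h
  exact (integrable_map_measure (by fun_prop) (by fun_prop)).mp h

lemma integral_abs_dotProduct_pi_gaussianReal (u : ι → ℝ) :
    ∫ x, |u ⬝ᵥ x| ∂(Measure.pi fun _ : ι ↦ gaussianReal 0 1) = √(2 * (u ⬝ᵥ u) / π) := by
  rw [← integral_map (by fun_prop) (by fun_prop), map_dotProduct_pi_gaussianReal,
    integral_abs_gaussianReal, Real.coe_toNNReal _ (by simpa using dotProduct_self_star_nonneg u)]

variable {κ : Type*} [Fintype κ]

lemma sum_mul_abs_le_sqrt_sum_sq {a : κ → ℝ} (ha : ∑ k, a k ^ 2 ≤ 1) (y : κ → ℝ) :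
    ∑ k, a k * |y k| ≤ √(∑ k, y k ^ 2) := by
  refine (Real.sum_mul_le_sqrt_mul_sqrt _ a (|y ·|)).trans ?_
  simp only [sq_abs]
  exact mul_le_of_le_one_left (Real.sqrt_nonneg _) (Real.sqrt_le_one.mpr ha)

lemma sqrt_sum_sq_le_sum_abs (y : κ → ℝ) : √(∑ k, y k ^ 2) ≤ ∑ k, |y k| := by
  refine Real.sqrt_le_iff.mpr ⟨Finset.sum_nonneg fun k _ ↦ abs_nonneg _, ?_⟩
  simpa only [sq_abs] using Finset.sum_sq_le_sq_sum_of_nonneg fun k _ ↦ abs_nonneg (y k)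

theorem sqrt_two_mul_sum_div_pi_le_integral_sqrt_sum_sq (b : κ → ι → ℝ) :
    √(2 * (∑ k, b k ⬝ᵥ b k) / π) ≤
      ∫ x, √(∑ k, (b k ⬝ᵥ x) ^ 2) ∂(Measure.pi fun _ : ι ↦ gaussianReal 0 1) := by
  set μ := Measure.pi fun _ : ι ↦ gaussianReal 0 1
  set n : κ → ℝ := fun k ↦ √(b k ⬝ᵥ b k)
  set s := √(∑ k, b k ⬝ᵥ b k)
  have hn_sq : ∀ k, n k ^ 2 = b k ⬝ᵥ b k :=
    fun k ↦ Real.sq_sqrt (by simpa using dotProduct_self_star_nonneg (b k))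
  have hsum : ∑ k, n k ^ 2 = s ^ 2 := by
    simp only [hn_sq, s]
    exact (Real.sq_sqrt (Finset.sum_nonneg fun k _ ↦ hn_sq k ▸ sq_nonneg _)).symm
  -- the weights of the equality case of Cauchy–Schwarz
  have hweights : ∑ k, (n k / s) ^ 2 ≤ 1 := by
    simp only [div_pow, ← Finset.sum_div, hsum]
    exact div_self_le_one _
  have hlower_int : Integrable (fun x ↦ ∑ k, n k / s * |b k ⬝ᵥ x|) μ :=
    integrable_finsetSum _ fun k _ ↦ (integrable_abs_dotProduct_pi_gaussianReal (b k)).const_mul _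
  have hupper_int : Integrable (fun x ↦ √(∑ k, (b k ⬝ᵥ x) ^ 2)) μ :=
    (integrable_finsetSum _ fun k _ ↦ integrable_abs_dotProduct_pi_gaussianReal (b k)).mono'
      (by fun_prop) (.of_forall fun x ↦ by
        rw [Real.norm_of_nonneg (Real.sqrt_nonneg _)]
        exact sqrt_sum_sq_le_sum_abs _)
  calc √(2 * (∑ k, b k ⬝ᵥ b k) / π)
      = √(2 / π) * (s ^ 2 / s) := by
        rw [sq, mul_self_div_self, mul_div_right_comm, Real.sqrt_mul (by positivity)]
    _ = ∑ k, n k / s * √(2 * (b k ⬝ᵥ b k) / π) := by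
        rw [← hsum, Finset.sum_div, Finset.mul_sum]
        refine Finset.sum_congr rfl fun k _ ↦ ?_
        rw [mul_div_right_comm, Real.sqrt_mul (by positivity)]
        ring
    _ = ∫ x, ∑ k, n k / s * |b k ⬝ᵥ x| ∂μ := by
        rw [integral_finsetSum _ fun k _ ↦
          (integrable_abs_dotProduct_pi_gaussianReal (b k)).const_mul _]
        simp_rw [integral_const_mul, integral_abs_dotProduct_pi_gaussianReal]
    _ ≤ ∫ x, √(∑ k, (b k ⬝ᵥ x) ^ 2) ∂μ :=
        integral_mono hlower_int hupper_int fun x ↦ sum_mul_abs_le_sqrt_sum_sq hweights _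

lemma dotProduct_conjTranspose_mul_self_mulVec (B : Matrix κ ι ℝ) (x : ι → ℝ) :
    x ⬝ᵥ (Bᴴ * B) *ᵥ x = ∑ k, (B k ⬝ᵥ x) ^ 2 := by
  rw [← mulVec_mulVec, dotProduct_mulVec, conjTranspose_eq_transpose_of_trivial, vecMul_transpose]
  simp [dotProduct, mulVec, sq]

lemma trace_conjTranspose_mul_self_eq_sum (B : Matrix κ ι ℝ) :
    (Bᴴ * B).trace = ∑ k, B k ⬝ᵥ B k := by
  rw [trace_mul_comm]
  simp [trace, mul_apply, dotProduct]

end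

theorem gaussian_quadratic_form_expectation_lower_general (d : ℕ)
    (A : Matrix (Fin d) (Fin d) ℝ) (hA : A.PosSemidef) :
    Real.sqrt (2 * A.trace / Real.pi) ≤
      ∫ x : Fin d → ℝ, Real.sqrt (x ⬝ᵥ A.mulVec x)
        ∂(Measure.pi fun _ : Fin d => gaussianReal 0 1) := by
  open scoped MatrixOrder in
  obtain ⟨B, rfl⟩ := CStarAlgebra.nonneg_iff_eq_star_mul_self.mp hA.nonneg
  simpa only [star_eq_conjTranspose, dotProduct_conjTranspose_mul_self_mulVec,
    trace_conjTranspose_mul_self_eq_sum] using sqrt_two_mul_sum_div_pi_le_integral_sqrt_sum_sq B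

/-- For a positive semidefinite matrix `A` and `x` drawn from the standard Gaussian
measure on `ℝ^d`, the expectation of `√(xᵀ A x)` is at least `√(2 trace A / π)`. -/
theorem gaussian_quadratic_form_expectation_lower (d : ℕ) (hd : 1 ≤ d)
    (A : Matrix (Fin d) (Fin d) ℝ) (hA : A.PosSemidef) :
    Real.sqrt (2 * A.trace / Real.pi) ≤
      ∫ x : Fin d → ℝ, Real.sqrt (x ⬝ᵥ A.mulVec x)
        ∂(Measure.pi fun _ : Fin d => gaussianReal 0 1) :=
  gaussian_quadratic_form_expectation_lower_general d A hA
end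

section
/- Let λ > 0, d ≥ 1, L > 0, and let φ₁, …, φ_k ∈ ℝ^d satisfy ‖φᵢ‖₂ ≤ L for all i. For each i ∈ {1,…,k} define Σᵢ = λ·I_d + Σ_{j=1}^{i−1} φⱼφⱼᵀ. Then Σ_{i=1}^k min{1, φᵢᵀ Σᵢ⁻¹ φᵢ} ≤ 2d·log((λ + k·L²)/λ). -/
/-!
The matrix determinant lemma gives `det Σᵢ₊₁ = det Σᵢ · (1 + φᵢᵀ Σᵢ⁻¹ φᵢ)`, so the potentials
telescope: `∑ᵢ log (1 + φᵢᵀ Σᵢ⁻¹ φᵢ) = log (det Σₖ₊₁ / λᵈ)`. AM-GM on the eigenvalues bounds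
`det Σₖ₊₁` by `(tr Σₖ₊₁ / d)ᵈ ≤ (λ + k L²)ᵈ`, and `min 1 x ≤ 2 log (1 + x)` for `x ≥ 0`.
-/

open Matrix

namespace Matrix

variable {n : Type*} [Fintype n]

theorem PosDef.add_sum_vecMulVec_self {ι : Type*} {A : Matrix n n ℝ} (hA : A.PosDef)
    (v : ι → n → ℝ) (s : Finset ι) : (A + ∑ i ∈ s, vecMulVec (v i) (v i)).PosDef :=
  hA.add_posSemidef <| posSemidef_sum s fun i _ => by
    simpa using posSemidef_vecMulVec_self_star (v i)

variable [DecidableEq n]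

theorem det_add_vecMulVec {R : Type*} [CommRing R] {A : Matrix n n R} (hA : IsUnit A.det)
    (u v : n → R) : (A + vecMulVec u v).det = A.det * (1 + v ⬝ᵥ A⁻¹ *ᵥ u) := by
  rw [vecMulVec_eq Unit, det_add_replicateCol_mul_replicateRow hA, Matrix.mul_assoc,
    ← replicateCol_mulVec, det_unique (1 + _)]
  simp

theorem det_add_sum_vecMulVec_self {ι : Type*} [LinearOrder ι] {A : Matrix n n ℝ}
    (hA : A.PosDef) (v : ι → n → ℝ) (s : Finset ι) :
    (A + ∑ i ∈ s, vecMulVec (v i) (v i)).det =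
      A.det * ∏ i ∈ s, (1 + v i ⬝ᵥ (A + ∑ j ∈ s with j < i, vecMulVec (v j) (v j))⁻¹ *ᵥ v i) := by
  induction s using Finset.induction_on_max with
  | empty => simp
  | insert a s has ih =>
    have ha : a ∉ s := fun h => lt_irrefl a (has a h)
    have hfilter : ∀ i ∈ s, {j ∈ insert a s | j < i} = {j ∈ s | j < i} := fun i hi => by
      rw [Finset.filter_insert, if_neg (has i hi).asymm]
    rw [Finset.sum_insert ha, add_left_comm, add_comm,
      det_add_vecMulVec (hA.add_sum_vecMulVec_self v s).det_pos.ne'.isUnit,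
      Finset.prod_insert ha, Finset.filter_insert, if_neg (lt_irrefl a),
      Finset.filter_true_of_mem has,
      Finset.prod_congr rfl fun i hi => by rw [hfilter i hi], ih]
    ring

theorem PosSemidef.det_le_trace_div_card_pow {A : Matrix n n ℝ} (hA : A.PosSemidef) :
    A.det ≤ (A.trace / Fintype.card n) ^ Fintype.card n := by
  rcases isEmpty_or_nonempty n with hn | hn
  · simp
  set μ := hA.isHermitian.eigenvalues
  have hcard : (0 : ℝ) < Fintype.card n := by exact_mod_cast Fintype.card_pos
  have hμ : ∀ i ∈ Finset.univ, 0 ≤ μ i := fun i _ => hA.eigenvalues_nonneg i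
  have hamgm : ∏ i, μ i ^ (Fintype.card n : ℝ)⁻¹ ≤ A.trace / Fintype.card n := by
    have := Real.geom_mean_le_arith_mean_weighted Finset.univ (fun _ => (Fintype.card n : ℝ)⁻¹)
      μ (fun _ _ => by positivity) (by simp [hcard.ne']) hμ
    simpa [← Finset.mul_sum, hA.isHermitian.trace_eq_sum_eigenvalues, div_eq_inv_mul] using this
  calc A.det = (∏ i, μ i ^ (Fintype.card n : ℝ)⁻¹) ^ Fintype.card n := by
        rw [hA.isHermitian.det_eq_prod_eigenvalues, ← Finset.prod_pow]
        refine Finset.prod_congr rfl fun i hi => ?_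
        rw [← Real.rpow_natCast, ← Real.rpow_mul (hμ i hi), inv_mul_cancel₀ hcard.ne',
          Real.rpow_one]
        simp [μ]
    _ ≤ (A.trace / Fintype.card n) ^ Fintype.card n := by
        gcongr
        exact Finset.prod_nonneg fun i hi => Real.rpow_nonneg (hμ i hi) _

theorem det_smul_one_add_sum_vecMulVec_self_le [Nonempty n] {ι : Type*} {lam : ℝ}
    (hlam : 0 < lam) (v : ι → n → ℝ) (s : Finset ι) {C : ℝ} (hv : ∀ i ∈ s, v i ⬝ᵥ v i ≤ C) :
    (lam • (1 : Matrix n n ℝ) + ∑ i ∈ s, vecMulVec (v i) (v i)).det ≤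
      (lam + s.card * C) ^ Fintype.card n := by
  have hpd := (PosDef.one.smul hlam).add_sum_vecMulVec_self v s
  have hcard : (1 : ℝ) ≤ Fintype.card n := by exact_mod_cast Fintype.card_pos
  have hsum_le : ∑ i ∈ s, v i ⬝ᵥ v i ≤ s.card * C := by
    simpa using Finset.sum_le_card_nsmul s _ _ hv
  have hsum_nonneg : 0 ≤ ∑ i ∈ s, v i ⬝ᵥ v i :=
    Finset.sum_nonneg fun i _ => by simpa using dotProduct_self_star_nonneg (v i)
  have htrace : (lam • (1 : Matrix n n ℝ) + ∑ i ∈ s, vecMulVec (v i) (v i)).trace =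
      Fintype.card n * lam + ∑ i ∈ s, v i ⬝ᵥ v i := by
    simp [trace_sum, mul_comm]
  refine hpd.posSemidef.det_le_trace_div_card_pow.trans (pow_le_pow_left₀
    (div_nonneg hpd.posSemidef.trace_nonneg (Nat.cast_nonneg _)) ?_ _)
  rw [div_le_iff₀ (by positivity), htrace]
  nlinarith

end Matrix

theorem Real.min_one_le_two_mul_log_one_add {x : ℝ} (hx : 0 ≤ x) :
    min 1 x ≤ 2 * Real.log (1 + x) := by
  have hlog := Real.le_log_one_add_of_nonneg hx
  have : min 1 x ≤ 2 * (2 * x / (x + 2)) := by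
    rw [mul_div_assoc', le_div_iff₀ (by positivity)]
    rcases le_total x 1 with h | h
    · rw [min_eq_right h]; nlinarith
    · rw [min_eq_left h]; linarith
  linarith

theorem elliptical_potential_general (d k : ℕ) (hd : 1 ≤ d) (lam L : ℝ)
    (hlam : 0 < lam)
    (φ : Fin k → Fin d → ℝ) (hφ : ∀ i, Real.sqrt (∑ j, φ i j ^ 2) ≤ L) :
    ∑ i : Fin k,
        min 1 (φ i ⬝ᵥ ((lam • (1 : Matrix (Fin d) (Fin d) ℝ) +
          ∑ j ∈ Finset.Iio i, vecMulVec (φ j) (φ j))⁻¹).mulVec (φ i)) ≤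
      2 * d * Real.log ((lam + k * L ^ 2) / lam) := by
  set A : Matrix (Fin d) (Fin d) ℝ := lam • 1
  set V := A + ∑ j, vecMulVec (φ j) (φ j)
  set x := fun i => φ i ⬝ᵥ (A + ∑ j ∈ Finset.Iio i, vecMulVec (φ j) (φ j))⁻¹ *ᵥ φ i
  have hA : A.PosDef := PosDef.one.smul hlam
  have hV : V.PosDef := hA.add_sum_vecMulVec_self φ _
  have hx : ∀ i, 0 ≤ x i := fun i => by
    simpa using (hA.add_sum_vecMulVec_self φ _).posSemidef.inv.dotProduct_mulVec_nonneg (φ i)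
  have hdet : V.det = lam ^ d * ∏ i, (1 + x i) := by
    simp [V, x, det_add_sum_vecMulVec_self hA, A, Finset.filter_gt_eq_Iio]
  have hdet_le : V.det ≤ (lam + k * L ^ 2) ^ d := by
    have hnorm : ∀ i ∈ Finset.univ, φ i ⬝ᵥ φ i ≤ L ^ 2 := fun i _ => by
      simpa [dotProduct, sq] using (Real.sqrt_le_iff.mp (hφ i)).2
    have : Nonempty (Fin d) := Fin.pos_iff_nonempty.mp hd
    simpa using det_smul_one_add_sum_vecMulVec_self_le hlam φ _ hnorm
  calc _ ≤ ∑ i, 2 * Real.log (1 + x i) :=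
        Finset.sum_le_sum fun i _ => Real.min_one_le_two_mul_log_one_add (hx i)
    _ = 2 * Real.log (V.det / lam ^ d) := by
        rw [← Finset.mul_sum, ← Real.log_prod fun i _ => by linarith [hx i], hdet]
        field_simp
    _ ≤ 2 * Real.log ((lam + k * L ^ 2) ^ d / lam ^ d) := by
        gcongr
        exact div_pos hV.det_pos (by positivity)
    _ = 2 * d * Real.log ((lam + k * L ^ 2) / lam) := by
        rw [← div_pow, Real.log_pow]
        ring

/-- Elliptical potential lemma: for `φ₁, …, φ_k ∈ ℝ^d` with `‖φᵢ‖₂ ≤ L` and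
`Σᵢ = λ I + ∑_{j < i} φⱼ φⱼᵀ`, we have
`∑ᵢ min {1, φᵢᵀ Σᵢ⁻¹ φᵢ} ≤ 2 d log ((λ + k L²)/λ)`. -/
theorem elliptical_potential (d k : ℕ) (hd : 1 ≤ d) (lam L : ℝ)
    (hlam : 0 < lam) (hL : 0 < L)
    (φ : Fin k → Fin d → ℝ) (hφ : ∀ i, Real.sqrt (∑ j, φ i j ^ 2) ≤ L) :
    ∑ i : Fin k,
        min 1 (φ i ⬝ᵥ ((lam • (1 : Matrix (Fin d) (Fin d) ℝ) +
          ∑ j ∈ Finset.Iio i, vecMulVec (φ j) (φ j))⁻¹).mulVec (φ i)) ≤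
      2 * d * Real.log ((lam + k * L ^ 2) / lam) :=
  elliptical_potential_general d k hd lam L hlam φ hφ
end

section
/- Let (Ω, 𝔉, P) be a probability space with a filtration (𝔉_t)_{t=0}^T, and let X₁, …, X_T be real-valued random variables such that X_t is 𝔉_t-measurable and 0 ≤ X_t ≤ B almost surely for some constant B > 0. Write E_t[·] = E[· | 𝔉_{t−1}] for the conditional expectation. Then for every δ ∈ (0,1): (a) with probability at least 1 − δ, Σ_{t=1}^T X_t ≤ (3/2)·Σ_{t=1}^T E_t[X_t] + 4B·log(1/δ); and (b) with probability at least 1 − δ, Σ_{t=1}^T E_t[X_t] ≤ 2·Σ_{t=1}^T X_t + 8B·log(1/δ). -/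
open MeasureTheory Finset


private lemma exp_chord {B : ℝ} (hB : 0 < B) (a : ℝ) {x : ℝ} (hx0 : 0 ≤ x) (hxB : x ≤ B) :
    Real.exp (a * x) ≤ 1 + (Real.exp (a * B) - 1) / B * x := by
  have ht0 : 0 ≤ x / B := div_nonneg hx0 hB.le
  have ht1 : (0:ℝ) ≤ 1 - x / B := by
    have := (div_le_one hB).2 hxB; linarith
  have key := convexOn_exp.2 (Set.mem_univ (0:ℝ)) (Set.mem_univ (a * B)) ht1 ht0 (by ring)
  have hax : (1 - x / B) • (0:ℝ) + (x / B) • (a * B) = a * x := by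
    simp only [smul_eq_mul, mul_zero, zero_add]; field_simp
  rw [hax, Real.exp_zero] at key
  have : (1 - x / B) • (1:ℝ) + (x / B) • Real.exp (a * B)
      = 1 + (Real.exp (a * B) - 1) / B * x := by
    simp only [smul_eq_mul]; field_simp; ring
  linarith [key, this.le, this.ge]

private lemma arith_a {B lg L SX SE : ℝ} (hB : 0 < B) (hlg : 1/3 ≤ lg) (hSE : 0 ≤ SE)
    (hL : 0 ≤ L) (h : (3/2) * SE + 4 * B * L ≤ SX) :
    L ≤ lg / B * SX - (1/2) / B * SE := by
  have h1 : lg / B * ((3/2) * SE + 4 * B * L) ≤ lg / B * SX :=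
    mul_le_mul_of_nonneg_left h (by positivity)
  have h2 : lg / B * ((3/2) * SE + 4 * B * L) = (3/2) * lg / B * SE + 4 * lg * L := by
    field_simp
  have h3 : (1/2) / B * SE ≤ (3/2) * lg / B * SE := by
    apply mul_le_mul_of_nonneg_right _ hSE
    rw [div_le_div_iff_of_pos_right hB]  -- may need name fix
    linarith
  have h4 : L ≤ 4 * lg * L := by nlinarith
  linarith

private lemma arith_b {B q L SX SE : ℝ} (hB : 0 < B) (hq0 : 0 < q) (hq : q ≤ 1/2)
    (hSX : 0 ≤ SX) (hL : 0 ≤ L) (h : 2 * SX + 8 * B * L ≤ SE) :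
    L ≤ (-1) / B * SX - (q - 1) / B * SE := by
  have h1 : (1 - q) / B * (2 * SX + 8 * B * L) ≤ (1 - q) / B * SE :=
    mul_le_mul_of_nonneg_left h (by apply div_nonneg _ hB.le; linarith)
  have h2 : (1 - q) / B * (2 * SX + 8 * B * L) = (2 * (1 - q)) / B * SX + 8 * (1 - q) * L := by
    field_simp
  have h3 : (1:ℝ) / B * SX ≤ (2 * (1 - q)) / B * SX := by
    apply mul_le_mul_of_nonneg_right _ hSX
    rw [div_le_div_iff_of_pos_right hB]
    linarith
  have h4 : L ≤ 8 * (1 - q) * L := by nlinarith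
  have : (-1) / B * SX - (q - 1) / B * SE = (1 - q) / B * SE - 1 / B * SX := by ring
  linarith

private lemma log_three_halves : (1:ℝ)/3 ≤ Real.log (3/2) := by
  have h : (1:ℝ) ≤ Real.log ((3/2)^(3:ℕ)) := by
    rw [Real.le_log_iff_exp_le (by norm_num)]
    calc Real.exp 1 ≤ 2.7182818286 := Real.exp_one_lt_d9.le
      _ ≤ (3/2)^(3:ℕ) := by norm_num
  rw [Real.log_pow] at h
  push_cast at h; linarith

private lemma exp_neg_one_le : Real.exp (-1) ≤ 1/2 := by
  have h2 : (2:ℝ) ≤ Real.exp 1 := by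
    have := Real.add_one_le_exp 1; linarith
  rw [Real.exp_neg, inv_le_comm₀ (Real.exp_pos 1) (by norm_num)]
  rw [show ((1:ℝ)/2)⁻¹ = 2 by norm_num]
  exact h2

private lemma freedman_core {Ω : Type*} {m : MeasurableSpace Ω}
    (μ : Measure Ω) [IsProbabilityMeasure μ]
    (T : ℕ) (ℱ : Filtration ℕ m) (X : ℕ → Ω → ℝ) (B : ℝ) (hB : 0 < B)
    (hmeas : ∀ t, 1 ≤ t → t ≤ T → StronglyMeasurable[ℱ t] (X t))
    (hbdd : ∀ t, 1 ≤ t → t ≤ T → ∀ᵐ ω ∂μ, 0 ≤ X t ω ∧ X t ω ≤ B)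
    (a : ℝ) {n : ℕ} (hn : n ≤ T) :
    Integrable (fun ω => ∏ t ∈ Finset.Icc 1 n,
        Real.exp (a * X t ω - (Real.exp (a * B) - 1) / B * (μ[X t | ℱ (t - 1)]) ω)) μ ∧
    ∫ ω, ∏ t ∈ Finset.Icc 1 n,
        Real.exp (a * X t ω - (Real.exp (a * B) - 1) / B * (μ[X t | ℱ (t - 1)]) ω) ∂μ ≤ 1 := by
  set c : ℝ := (Real.exp (a * B) - 1) / B with hc
  set E : ℕ → Ω → ℝ := fun t => μ[X t | ℱ (t - 1)] with hE
  set Y : ℕ → Ω → ℝ := fun t ω => Real.exp (a * X t ω - c * E t ω) with hY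
  -- basic facts for each relevant t
  have hXsm : ∀ t, 1 ≤ t → t ≤ T → StronglyMeasurable (X t) :=
    fun t h1 h2 => (hmeas t h1 h2).mono (ℱ.le t)
  have hXint : ∀ t, 1 ≤ t → t ≤ T → Integrable (X t) μ := by
    intro t h1 h2
    refine ⟨(hXsm t h1 h2).aestronglyMeasurable, HasFiniteIntegral.of_bounded (C := B) ?_⟩
    filter_upwards [hbdd t h1 h2] with ω ⟨h0, hb⟩
    rw [Real.norm_eq_abs, abs_of_nonneg h0]; exact hb
  have hE0 : ∀ t, 1 ≤ t → t ≤ T → 0 ≤ᵐ[μ] E t := by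
    intro t h1 h2
    exact condExp_nonneg ((hbdd t h1 h2).mono fun ω h => h.1)
  have hEB : ∀ t, 1 ≤ t → t ≤ T → ∀ᵐ ω ∂μ, E t ω ≤ B := by
    intro t h1 h2
    have := condExp_mono (m := ℱ (t-1)) (hXint t h1 h2) (integrable_const B)
      ((hbdd t h1 h2).mono fun ω h => h.2)
    rw [condExp_const (ℱ.le (t-1))] at this
    exact this
  have hYsm : ∀ t, 1 ≤ t → t ≤ T → StronglyMeasurable[ℱ t] (Y t) := by
    intro t h1 h2
    have hEm : StronglyMeasurable[ℱ t] (E t) :=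
      stronglyMeasurable_condExp.mono (ℱ.mono (Nat.sub_le t 1))
    exact Real.continuous_exp.comp_stronglyMeasurable
      (((hmeas t h1 h2).const_mul a).sub (hEm.const_mul c))
  have hYbd : ∀ t, 1 ≤ t → t ≤ T →
      ∀ᵐ ω ∂μ, ‖Y t ω‖ ≤ Real.exp (|a| * B + |c| * B) := by
    intro t h1 h2
    filter_upwards [hbdd t h1 h2, hE0 t h1 h2, hEB t h1 h2] with ω ⟨hx0, hxB⟩ he0 heB
    rw [Real.norm_eq_abs, abs_of_pos (Real.exp_pos _), Real.exp_le_exp]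
    have h1' : a * X t ω ≤ |a| * B := by
      calc a * X t ω ≤ |a * X t ω| := le_abs_self _
        _ = |a| * |X t ω| := abs_mul _ _
        _ ≤ |a| * B := by
            apply mul_le_mul_of_nonneg_left _ (abs_nonneg a)
            rw [abs_of_nonneg hx0]; exact hxB
    have h2' : -(c * E t ω) ≤ |c| * B := by
      calc -(c * E t ω) ≤ |c * E t ω| := neg_le_abs _
        _ = |c| * |E t ω| := abs_mul _ _
        _ ≤ |c| * B := by
            apply mul_le_mul_of_nonneg_left _ (abs_nonneg c)
            rw [abs_of_nonneg he0]; exact heB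
    linarith
  -- integrability of partial products
  have hprod_int : ∀ k, k ≤ T → Integrable (fun ω => ∏ t ∈ Finset.Icc 1 k, Y t ω) μ := by
    intro k hk
    have hsm : StronglyMeasurable (fun ω => ∏ t ∈ Finset.Icc 1 k, Y t ω) := by
      apply Finset.stronglyMeasurable_fun_prod
      intro t ht
      rw [Finset.mem_Icc] at ht
      exact (hYsm t ht.1 (ht.2.trans hk)).mono (ℱ.le t)
    refine ⟨hsm.aestronglyMeasurable,
      HasFiniteIntegral.of_bounded (C := Real.exp (|a| * B + |c| * B) ^ k) ?_⟩
    have hall : ∀ᵐ ω ∂μ, ∀ t ∈ (Finset.Icc 1 k : Finset ℕ), ‖Y t ω‖ ≤ Real.exp (|a| * B + |c| * B) := by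
      rw [show (∀ᵐ ω ∂μ, ∀ t ∈ (Finset.Icc 1 k : Finset ℕ), ‖Y t ω‖ ≤ Real.exp (|a| * B + |c| * B))
        ↔ ∀ᵐ ω ∂μ, ∀ t ∈ (↑(Finset.Icc 1 k : Finset ℕ) : Set ℕ), ‖Y t ω‖ ≤ Real.exp (|a| * B + |c| * B) from Iff.rfl]
      rw [ae_ball_iff (Set.to_countable _)]
      intro t ht
      rw [Finset.mem_coe, Finset.mem_Icc] at ht
      exact hYbd t ht.1 (ht.2.trans hk)
    filter_upwards [hall] with ω hω
    calc ‖∏ t ∈ Finset.Icc 1 k, Y t ω‖ = ∏ t ∈ Finset.Icc 1 k, |Y t ω| := by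
          rw [Real.norm_eq_abs, Finset.abs_prod]
      _ ≤ ∏ t ∈ Finset.Icc 1 k, Real.exp (|a| * B + |c| * B) := by
          apply Finset.prod_le_prod (fun t _ => abs_nonneg _)
          intro t ht; exact hω t ht
      _ = Real.exp (|a| * B + |c| * B) ^ k := by
          simp [Finset.prod_const, Nat.card_Icc]
  -- main induction
  have main : ∀ k, k ≤ T → ∫ ω, ∏ t ∈ Finset.Icc 1 k, Y t ω ∂μ ≤ 1 := by
    intro k
    induction k with
    | zero => intro _; simp
    | succ n IH =>
      intro hk
      have hnT : n ≤ T := le_of_lt (Nat.lt_of_lt_of_le (Nat.lt_succ_self n) hk)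
      have IH' := IH hnT
      have h1n : 1 ≤ n + 1 := Nat.succ_le_succ (Nat.zero_le n)
      -- rewrite product
      have hsplit : ∀ ω, ∏ t ∈ Finset.Icc 1 (n+1), Y t ω
          = (∏ t ∈ Finset.Icc 1 n, Y t ω) * Y (n+1) ω := by
        intro ω; exact Finset.prod_Icc_succ_top h1n _
      set f : Ω → ℝ := fun ω => ∏ t ∈ Finset.Icc 1 n, Y t ω with hf
      have hfsm : StronglyMeasurable[ℱ n] f := by
        apply Finset.stronglyMeasurable_fun_prod
        intro t ht
        rw [Finset.mem_Icc] at ht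
        exact (hYsm t ht.1 (ht.2.trans hnT)).mono (ℱ.mono ht.2)
      have hfint : Integrable f μ := hprod_int n hnT
      have hgint : Integrable (Y (n+1)) μ := by
        refine ⟨((hYsm (n+1) h1n hk).mono (ℱ.le (n+1))).aestronglyMeasurable,
          HasFiniteIntegral.of_bounded (C := Real.exp (|a| * B + |c| * B)) (hYbd (n+1) h1n hk)⟩
      have hfgint : Integrable (f * Y (n+1)) μ := by
        have := hprod_int (n+1) hk
        apply this.congr
        filter_upwards with ω
        exact hsplit ω
      -- conditional expectation of Y (n+1) is ≤ 1
      have hEsm : StronglyMeasurable[ℱ n] (E (n+1)) := stronglyMeasurable_condExp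
      have hcond : (μ[Y (n+1) | ℱ n]) ≤ᵐ[μ] fun _ => (1:ℝ) := by
        set φ : Ω → ℝ := fun ω => Real.exp (-(c * E (n+1) ω)) with hφ
        set ψ : Ω → ℝ := fun ω => Real.exp (a * X (n+1) ω) with hψ
        have hYeq : Y (n+1) = φ * ψ := by
          funext ω
          simp only [hφ, hψ, Pi.mul_apply, hY, ← Real.exp_add]
          ring_nf
        have hφsm : StronglyMeasurable[ℱ n] φ :=
          Real.continuous_exp.comp_stronglyMeasurable (hEsm.const_mul c).neg
        have hψint : Integrable ψ μ := by
          refine ⟨(Real.continuous_exp.comp_stronglyMeasurable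
            ((hXsm (n+1) h1n hk).const_mul a)).aestronglyMeasurable,
            HasFiniteIntegral.of_bounded (C := Real.exp (|a| * B)) ?_⟩
          filter_upwards [hbdd (n+1) h1n hk] with ω ⟨hx0, hxB⟩
          rw [Real.norm_eq_abs, abs_of_pos (Real.exp_pos _), Real.exp_le_exp]
          calc a * X (n+1) ω ≤ |a * X (n+1) ω| := le_abs_self _
            _ = |a| * |X (n+1) ω| := abs_mul _ _
            _ ≤ |a| * B := by
                apply mul_le_mul_of_nonneg_left _ (abs_nonneg a)
                rw [abs_of_nonneg hx0]; exact hxB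
        have hφψint : Integrable (φ * ψ) μ := by
          rw [← hYeq]; exact hgint
        have hpull := condExp_mul_of_stronglyMeasurable_left (m := ℱ n) (μ := μ) hφsm hφψint hψint
        -- μ[ψ | ℱ n] ≤ 1 + c * E (n+1)
        have hψle : ψ ≤ᵐ[μ] fun ω => 1 + c * X (n+1) ω := by
          filter_upwards [hbdd (n+1) h1n hk] with ω ⟨hx0, hxB⟩
          exact exp_chord hB a hx0 hxB
        have hlin_int : Integrable (fun ω => 1 + c * X (n+1) ω) μ := by
          have : (fun ω => 1 + c * X (n+1) ω) = (fun _ => (1:ℝ)) + c • (X (n+1)) := by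
            funext ω; simp [smul_eq_mul]
          rw [this]
          exact (integrable_const 1).add ((hXint (n+1) h1n hk).smul c)
        have hψcond : (μ[ψ | ℱ n]) ≤ᵐ[μ] fun ω => 1 + c * E (n+1) ω := by
          have hmono := condExp_mono (m := ℱ n) hψint hlin_int hψle
          have hadd : (μ[(fun ω => 1 + c * X (n+1) ω) | ℱ n])
              =ᵐ[μ] fun ω => 1 + c * E (n+1) ω := by
            have heq : (fun ω => 1 + c * X (n+1) ω) = (fun _ => (1:ℝ)) + c • (X (n+1)) := by
              funext ω; simp [smul_eq_mul]
            rw [heq]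
            calc μ[(fun _ => (1:ℝ)) + c • (X (n+1)) | ℱ n]
                =ᵐ[μ] μ[(fun _ => (1:ℝ)) | ℱ n] + μ[c • (X (n+1)) | ℱ n] :=
                  condExp_add (integrable_const 1) ((hXint (n+1) h1n hk).smul c) _
              _ =ᵐ[μ] fun ω => 1 + c * E (n+1) ω := by
                  have h1 := condExp_const (μ := μ) (ℱ.le n) (1:ℝ)
                  have h2 := condExp_smul (μ := μ) (m := ℱ n) c (X (n+1))
                  filter_upwards [h2] with ω hω
                  simp only [Pi.add_apply, h1, hω, Pi.smul_apply, smul_eq_mul]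
                  rfl
          exact hmono.trans (Filter.EventuallyEq.le hadd)
        have hcond_nonneg : (0:Ω → ℝ) ≤ᵐ[μ] μ[ψ | ℱ n] :=
          condExp_nonneg (Filter.Eventually.of_forall fun ω => (Real.exp_pos _).le)
        rw [hYeq]
        filter_upwards [hpull, hψcond, hcond_nonneg] with ω h1 h2 h3
        rw [h1]
        simp only [Pi.mul_apply]
        calc φ ω * (μ[ψ | ℱ n]) ω ≤ φ ω * (1 + c * E (n+1) ω) := by
              apply mul_le_mul_of_nonneg_left h2 (Real.exp_pos _).le
          _ ≤ φ ω * Real.exp (c * E (n+1) ω) := by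
              apply mul_le_mul_of_nonneg_left _ (Real.exp_pos _).le
              linarith [Real.add_one_le_exp (c * E (n+1) ω)]
          _ = 1 := by
              simp only [hφ, ← Real.exp_add]
              rw [show -(c * E (n+1) ω) + c * E (n+1) ω = 0 by ring, Real.exp_zero]
      -- put it together
      calc ∫ ω, ∏ t ∈ Finset.Icc 1 (n+1), Y t ω ∂μ
          = ∫ ω, (f * Y (n+1)) ω ∂μ := by
            apply integral_congr_ae
            filter_upwards with ω
            exact hsplit ω
        _ = ∫ ω, (μ[f * Y (n+1) | ℱ n]) ω ∂μ := (integral_condExp (ℱ.le n)).symm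
        _ = ∫ ω, (f * μ[Y (n+1) | ℱ n]) ω ∂μ := by
            apply integral_congr_ae
            exact (condExp_mul_of_stronglyMeasurable_left hfsm hfgint hgint)
        _ ≤ ∫ ω, f ω ∂μ := by
            apply integral_mono_of_nonneg _ hfint
            · filter_upwards [hcond] with ω hω
              simp only [Pi.mul_apply]
              calc f ω * (μ[Y (n+1) | ℱ n]) ω ≤ f ω * 1 := by
                    apply mul_le_mul_of_nonneg_left hω
                    exact Finset.prod_nonneg fun t _ => (Real.exp_pos _).le
                _ = f ω := mul_one _
            · filter_upwards [condExp_nonneg (μ := μ) (m := ℱ n)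
                (Filter.Eventually.of_forall fun ω => (Real.exp_pos _).le : 0 ≤ᵐ[μ] Y (n+1))]
                with ω hω
              simp only [Pi.mul_apply]
              exact mul_nonneg (Finset.prod_nonneg fun t _ => (Real.exp_pos _).le) hω
        _ ≤ 1 := IH'
  exact ⟨hprod_int n hn, main n hn⟩

private lemma freedman_part {Ω : Type*} {m : MeasurableSpace Ω}
    (μ : Measure Ω) [IsProbabilityMeasure μ]
    (T : ℕ) (ℱ : Filtration ℕ m) (X : ℕ → Ω → ℝ) (B : ℝ) (hB : 0 < B)
    (hmeas : ∀ t, 1 ≤ t → t ≤ T → StronglyMeasurable[ℱ t] (X t))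
    (hbdd : ∀ t, 1 ≤ t → t ≤ T → ∀ᵐ ω ∂μ, 0 ≤ X t ω ∧ X t ω ≤ B)
    (a : ℝ) (δ : ℝ) (hδ0 : 0 < δ) (hδ1 : δ < 1) (G : Set Ω)
    (himp : ∀ ω, (∀ t ∈ Finset.Icc 1 T, 0 ≤ X t ω) →
      (∀ t ∈ Finset.Icc 1 T, 0 ≤ (μ[X t | ℱ (t - 1)]) ω) → ω ∉ G →
      Real.log (1 / δ) ≤ ∑ t ∈ Finset.Icc 1 T,
        (a * X t ω - (Real.exp (a * B) - 1) / B * (μ[X t | ℱ (t - 1)]) ω)) :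
    ENNReal.ofReal (1 - δ) ≤ μ G := by
  obtain ⟨hint, hI⟩ := freedman_core μ T ℱ X B hB hmeas hbdd a (le_refl T)
  set c : ℝ := (Real.exp (a * B) - 1) / B with hc
  set M : Ω → ℝ := fun ω => ∏ t ∈ Finset.Icc 1 T,
    Real.exp (a * X t ω - c * (μ[X t | ℱ (t - 1)]) ω) with hM
  have hMnn : ∀ ω, 0 ≤ M ω := fun ω => Finset.prod_nonneg fun t _ => (Real.exp_pos _).le
  set S : Set Ω := {ω | 1 / δ ≤ M ω} with hS
  -- Markov
  have hmarkov : μ S ≤ ENNReal.ofReal δ := by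
    have h1 := mul_meas_ge_le_integral_of_nonneg
      (Filter.Eventually.of_forall hMnn) hint (1 / δ)
    have h2 : (1 / δ) * (μ S).toReal ≤ 1 := le_trans h1 hI
    have h3 : (μ S).toReal ≤ δ := by
      rw [div_mul_eq_mul_div, div_le_one hδ0] at h2
      linarith
    exact (ENNReal.le_ofReal_iff_toReal_le (measure_ne_top μ S) hδ0.le).2 h3
  -- a.e. facts
  have haeX : ∀ᵐ ω ∂μ, ∀ t ∈ (↑(Finset.Icc 1 T) : Set ℕ), 0 ≤ X t ω := by
    rw [ae_ball_iff (Set.to_countable _)]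
    intro t ht
    rw [Finset.mem_coe, Finset.mem_Icc] at ht
    exact (hbdd t ht.1 ht.2).mono fun ω h => h.1
  have haeE : ∀ᵐ ω ∂μ, ∀ t ∈ (↑(Finset.Icc 1 T) : Set ℕ), 0 ≤ (μ[X t | ℱ (t - 1)]) ω := by
    rw [ae_ball_iff (Set.to_countable _)]
    intro t ht
    rw [Finset.mem_coe, Finset.mem_Icc] at ht
    exact condExp_nonneg ((hbdd t ht.1 ht.2).mono fun ω h => h.1)
  -- a.e. set inclusion Sᶜ ⊆ G
  have hincl : μ Sᶜ ≤ μ G := by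
    apply measure_mono_ae
    filter_upwards [haeX, haeE] with ω hX hE hωS
    by_contra hωG
    apply hωS
    show 1 / δ ≤ M ω
    have hlog := himp ω (fun t ht => hX t ht) (fun t ht => hE t ht) hωG
    have : M ω = Real.exp (∑ t ∈ Finset.Icc 1 T,
        (a * X t ω - c * (μ[X t | ℱ (t - 1)]) ω)) := (Real.exp_sum _ _).symm
    rw [this]
    calc 1 / δ = Real.exp (Real.log (1 / δ)) := (Real.exp_log (by positivity)).symm
      _ ≤ _ := Real.exp_le_exp.2 hlog
  -- conclude
  have hcompl : (1 : ENNReal) - μ S ≤ μ Sᶜ := by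
    rw [tsub_le_iff_left]
    calc (1 : ENNReal) = μ Set.univ := (measure_univ (μ := μ)).symm
      _ = μ (S ∪ Sᶜ) := by rw [Set.union_compl_self]
      _ ≤ μ S + μ Sᶜ := measure_union_le _ _
  calc ENNReal.ofReal (1 - δ) = 1 - ENNReal.ofReal δ := by
        rw [ENNReal.ofReal_sub 1 hδ0.le, ENNReal.ofReal_one]
    _ ≤ 1 - μ S := tsub_le_tsub_left hmarkov 1
    _ ≤ μ Sᶜ := hcompl
    _ ≤ μ G := hincl

/-- Freedman-type inequality for nonnegative bounded adapted sequences: for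
`X_t` that are `𝔉_t`-measurable with `0 ≤ X_t ≤ B` a.s., each of the following holds
with probability at least `1 - δ`:
(a) `∑ X_t ≤ (3/2) ∑ E[X_t | 𝔉_{t-1}] + 4 B log (1/δ)`;
(b) `∑ E[X_t | 𝔉_{t-1}] ≤ 2 ∑ X_t + 8 B log (1/δ)`. -/
theorem freedman_bounded_adapted {Ω : Type*} {m : MeasurableSpace Ω}
    (μ : Measure Ω) [IsProbabilityMeasure μ]
    (T : ℕ) (ℱ : Filtration ℕ m) (X : ℕ → Ω → ℝ) (B : ℝ) (hB : 0 < B)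
    (hmeas : ∀ t, 1 ≤ t → t ≤ T → StronglyMeasurable[ℱ t] (X t))
    (hbdd : ∀ t, 1 ≤ t → t ≤ T → ∀ᵐ ω ∂μ, 0 ≤ X t ω ∧ X t ω ≤ B)
    (δ : ℝ) (hδ : δ ∈ Set.Ioo (0 : ℝ) 1) :
    ENNReal.ofReal (1 - δ) ≤
      μ {ω | ∑ t ∈ Finset.Icc 1 T, X t ω ≤
        (3 / 2) * ∑ t ∈ Finset.Icc 1 T, (μ[X t | ℱ (t - 1)]) ω +
          4 * B * Real.log (1 / δ)} ∧
    ENNReal.ofReal (1 - δ) ≤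
      μ {ω | ∑ t ∈ Finset.Icc 1 T, (μ[X t | ℱ (t - 1)]) ω ≤
        2 * ∑ t ∈ Finset.Icc 1 T, X t ω + 8 * B * Real.log (1 / δ)} := by
  obtain ⟨hδ0, hδ1⟩ := hδ
  have hL0 : 0 ≤ Real.log (1 / δ) :=
    Real.log_nonneg (by rw [le_div_iff₀ hδ0]; linarith)
  constructor
  · -- part (a)
    apply freedman_part μ T ℱ X B hB hmeas hbdd (Real.log (3/2) / B) δ hδ0 hδ1
    intro ω hX hE hG
    rw [Set.mem_setOf_eq, not_le] at hG
    have hab : Real.log (3/2) / B * B = Real.log (3/2) := div_mul_cancel₀ _ hB.ne'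
    have hcval : (Real.exp (Real.log (3/2) / B * B) - 1) / B = (1/2) / B := by
      rw [hab, Real.exp_log (by norm_num : (0:ℝ) < 3/2)]
      norm_num
    rw [Finset.sum_sub_distrib]
    rw [← Finset.mul_sum, ← Finset.mul_sum, hcval]
    exact arith_a hB log_three_halves
      (Finset.sum_nonneg hE) hL0 hG.le
  · -- part (b)
    apply freedman_part μ T ℱ X B hB hmeas hbdd ((-1) / B) δ hδ0 hδ1
    intro ω hX hE hG
    rw [Set.mem_setOf_eq, not_le] at hG
    have hab : (-1 : ℝ) / B * B = -1 := div_mul_cancel₀ _ hB.ne'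
    rw [Finset.sum_sub_distrib, ← Finset.mul_sum, ← Finset.mul_sum, hab]
    exact arith_b hB (Real.exp_pos _) exp_neg_one_le
      (Finset.sum_nonneg hX) hL0 hG.le
end

section
/- Let d ≥ 1, σ > 0, and μ₁, μ₂ ∈ ℝ^d, and set α = ‖μ₁ − μ₂‖₂. Let p₁ and p₂ be the densities of the isotropic Gaussian distributions N(μ₁, σ²I_d) and N(μ₂, σ²I_d) on ℝ^d, i.e., pⱼ(x) = Π_{i=1}^d g(x_i; μ_{j,i}, σ²) where g(·; m, σ²) is the one-dimensional Gaussian density with mean m and variance σ². Then the total variation distance satisfies (1/2)·∫_{ℝ^d} |p₁(x) − p₂(x)| dx = ∫_{−α/(2σ)}^{α/(2σ)} g(x; 0, 1) dx. -/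
open MeasureTheory

/-- The one-dimensional Gaussian density with mean `m` and variance `s²`. -/
noncomputable def gaussPdf (m s : ℝ) (x : ℝ) : ℝ :=
  (Real.sqrt (2 * Real.pi * s ^ 2))⁻¹ * Real.exp (-(x - m) ^ 2 / (2 * s ^ 2))

/-!
Both densities are radial about their means, so the `L¹` distance between them depends only on
the distance `α` of the means: a reflection followed by a translation is a volume-preserving
isometry carrying any pair of points to any other pair at the same distance. With the means
moved to `±(α/2) e₀` the two product densities share all factors but the first, and Fubini
reduces the claim to dimension one. There the two Gaussians cross at `0`, so by symmetry the
`L¹` distance is `2 ∫_{x>0} (g(x; α/2, σ²) - g(x + α; α/2, σ²)) dx = 2 ∫_0^α g(x; α/2, σ²) dx`,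
which standardizes to the stated integral.
-/

open ProbabilityTheory Set Real

lemma setIntegral_Ioi_comp_add_right (f : ℝ → ℝ) (a b : ℝ) :
    ∫ x in Ioi b, f (x + a) = ∫ x in Ioi (b + a), f x := by
  have hpre : (· + a) ⁻¹' Ioi (b + a) = Ioi b := by ext x; simp
  rw [← hpre, (measurePreserving_add_right volume a).setIntegral_preimage_emb
    (measurableEmbedding_addRight a)]

lemma setIntegral_Ioi_sub_comp_add_right {f : ℝ → ℝ} (hf : Integrable f) (a : ℝ) :
    ∫ x in Ioi 0, (f x - f (x + a)) = ∫ x in 0..a, f x := by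
  rw [integral_sub hf.integrableOn (hf.comp_add_right a).integrableOn,
    setIntegral_Ioi_comp_add_right, zero_add,
    intervalIntegral.integral_Ioi_sub_Ioi' hf.integrableOn hf.integrableOn]

section OneDimensional

variable {m σ : ℝ}

lemma gaussPdf_eq_gaussianPDFReal (m σ : ℝ) :
    gaussPdf m σ = gaussianPDFReal m (⟨σ ^ 2, sq_nonneg σ⟩ : NNReal) := rfl

lemma integrable_gaussPdf (m σ : ℝ) : Integrable (gaussPdf m σ) :=
  gaussPdf_eq_gaussianPDFReal m σ ▸ integrable_gaussianPDFReal _ _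

lemma gaussPdf_nonneg (m σ x : ℝ) : 0 ≤ gaussPdf m σ x :=
  gaussPdf_eq_gaussianPDFReal m σ ▸ gaussianPDFReal_nonneg _ _ _

lemma integral_gaussPdf (m : ℝ) (hσ : σ ≠ 0) : ∫ x, gaussPdf m σ x = 1 := by
  rw [gaussPdf_eq_gaussianPDFReal]
  refine integral_gaussianPDFReal_eq_one m fun h ↦ hσ ?_
  exact pow_eq_zero_iff two_ne_zero |>.mp (congrArg NNReal.toReal h)

lemma gaussPdf_neg (m σ x : ℝ) : gaussPdf m σ (-x) = gaussPdf (-m) σ x := by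
  simp only [gaussPdf]; ring_nf

lemma gaussPdf_neg_le_gaussPdf {x : ℝ} (hm : 0 ≤ m) (hx : 0 ≤ x) :
    gaussPdf (-m) σ x ≤ gaussPdf m σ x := by
  unfold gaussPdf
  gcongr _ * exp (?_ / _)
  nlinarith

lemma gaussPdf_eq_inv_mul_standard (hσ : 0 < σ) (x : ℝ) :
    gaussPdf m σ x = σ⁻¹ * gaussPdf 0 1 (x / σ - m / σ) := by
  have hsqrt : √(2 * π * σ ^ 2) = √(2 * π * 1 ^ 2) * σ := by
    rw [show 2 * π * σ ^ 2 = 2 * π * 1 ^ 2 * σ ^ 2 by ring, Real.sqrt_mul (by positivity),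
      Real.sqrt_sq hσ.le]
  have hexp : -(x / σ - m / σ - 0) ^ 2 / (2 * 1 ^ 2) = -(x - m) ^ 2 / (2 * σ ^ 2) := by
    field_simp
    ring
  simp only [gaussPdf, hsqrt, hexp, mul_inv]
  ring

lemma intervalIntegral_gaussPdf (hσ : 0 < σ) (a b : ℝ) :
    ∫ x in a..b, gaussPdf m σ x = ∫ x in a / σ - m / σ..b / σ - m / σ, gaussPdf 0 1 x := by
  simp only [gaussPdf_eq_inv_mul_standard hσ, intervalIntegral.integral_const_mul,
    intervalIntegral.integral_comp_div_sub _ hσ.ne', smul_eq_mul, inv_mul_cancel_left₀ hσ.ne']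

lemma integral_abs_gaussPdf_sub_gaussPdf_neg {a : ℝ} (hσ : 0 < σ) (ha : 0 ≤ a) :
    ∫ x, |gaussPdf (a / 2) σ x - gaussPdf (-(a / 2)) σ x| =
      2 * ∫ x in -(a / (2 * σ))..a / (2 * σ), gaussPdf 0 1 x := by
  set f := gaussPdf (a / 2) σ
  have hf_neg (x : ℝ) : f (-x) = gaussPdf (-(a / 2)) σ x := gaussPdf_neg _ _ _
  have hf_shift (x : ℝ) : f (x + a) = gaussPdf (-(a / 2)) σ x := by
    simp only [f, gaussPdf]; ring_nf
  have h_even (x : ℝ) : |f |x| - f (-|x|)| = |f x - f (-x)| := by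
    rcases abs_choice x with h | h <;> rw [h]
    rw [neg_neg, abs_sub_comm]
  calc ∫ x, |f x - gaussPdf (-(a / 2)) σ x|
      = ∫ x, |f |x| - f (-|x|)| := by simp only [h_even, ← hf_neg]
    _ = 2 * ∫ x in Ioi 0, |f x - f (-x)| := integral_comp_abs (f := fun x ↦ |f x - f (-x)|)
    _ = 2 * ∫ x in Ioi 0, (f x - f (x + a)) := by
      congr 1
      refine setIntegral_congr_fun measurableSet_Ioi fun x hx ↦ ?_
      rw [hf_neg, hf_shift, abs_of_nonneg]
      exact sub_nonneg.2 <| gaussPdf_neg_le_gaussPdf (by positivity) hx.le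
    _ = 2 * ∫ x in -(a / (2 * σ))..a / (2 * σ), gaussPdf 0 1 x := by
      rw [setIntegral_Ioi_sub_comp_add_right (integrable_gaussPdf _ _),
        intervalIntegral_gaussPdf hσ]
      congr 2 <;> field_simp <;> ring

end OneDimensional

lemma integral_comp_norm_sub_norm_sub_eq {E G : Type*} [NormedAddCommGroup E]
    [InnerProductSpace ℝ E] [FiniteDimensional ℝ E] [MeasurableSpace E] [BorelSpace E]
    [NormedAddCommGroup G] [NormedSpace ℝ G] (K : ℝ → ℝ → G) {m₁ m₂ n₁ n₂ : E}
    (h : ‖n₁ - n₂‖ = ‖m₁ - m₂‖) :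
    ∫ z, K ‖z - m₁‖ ‖z - m₂‖ = ∫ z, K ‖z - n₁‖ ‖z - n₂‖ := by
  set R := (ℝ ∙ (n₁ - n₂ - (m₁ - m₂)))ᗮ.reflection
  have hR : R (n₁ - n₂) = m₁ - m₂ := Submodule.reflection_sub h
  have h₁ (z : E) : R z + (m₁ - R n₁) - m₁ = R (z - n₁) := by rw [map_sub]; abel
  have h₂ (z : E) : R z + (m₁ - R n₁) - m₂ = R (z - n₂) := by
    rw [show z - n₂ = z - n₁ + (n₁ - n₂) by abel, map_add, hR, ← h₁]; abel
  rw [← integral_add_right_eq_self _ (m₁ - R n₁),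
    ← R.measurePreserving.integral_comp R.toHomeomorph.measurableEmbedding]
  simp only [h₁, h₂, LinearIsometryEquiv.norm_map]

lemma norm_toLp_sub_toLp_sq {ι : Type*} [Fintype ι] (x y : ι → ℝ) :
    ‖WithLp.toLp 2 x - WithLp.toLp 2 y‖ ^ 2 = ∑ i, (x i - y i) ^ 2 := by
  simp [EuclideanSpace.norm_sq_eq]

lemma prod_gaussPdf {ι : Type*} [Fintype ι] (σ : ℝ) (μ x : ι → ℝ) :
    ∏ i, gaussPdf (μ i) σ (x i) = (√(2 * π * σ ^ 2))⁻¹ ^ Fintype.card ι *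
      exp (-‖WithLp.toLp 2 x - WithLp.toLp 2 μ‖ ^ 2 / (2 * σ ^ 2)) := by
  simp only [gaussPdf, Finset.prod_mul_distrib, Finset.prod_const, Finset.card_univ,
    ← exp_sum, norm_toLp_sub_toLp_sq, ← Finset.sum_div, Finset.sum_neg_distrib, neg_div]

lemma integral_abs_sub_prod_gaussPdf_congr {ι : Type*} [Fintype ι] (σ : ℝ)
    {μ₁ μ₂ ν₁ ν₂ : ι → ℝ} (h : ∑ i, (ν₁ i - ν₂ i) ^ 2 = ∑ i, (μ₁ i - μ₂ i) ^ 2) :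
    ∫ x : ι → ℝ, |∏ i, gaussPdf (μ₁ i) σ (x i) - ∏ i, gaussPdf (μ₂ i) σ (x i)| =
      ∫ x : ι → ℝ, |∏ i, gaussPdf (ν₁ i) σ (x i) - ∏ i, gaussPdf (ν₂ i) σ (x i)| := by
  have h_toLp (F : EuclideanSpace ℝ ι → ℝ) : ∫ x : ι → ℝ, F (WithLp.toLp 2 x) = ∫ z, F z :=
    (PiLp.volume_preserving_toLp ι).integral_comp (MeasurableEquiv.toLp 2 _).measurableEmbedding F
  have h_norm :
      ‖WithLp.toLp 2 ν₁ - WithLp.toLp 2 ν₂‖ = ‖WithLp.toLp 2 μ₁ - WithLp.toLp 2 μ₂‖ := by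
    rw [← sq_eq_sq₀ (norm_nonneg _) (norm_nonneg _), norm_toLp_sub_toLp_sq,
      norm_toLp_sub_toLp_sq, h]
  set c := (√(2 * π * σ ^ 2))⁻¹ ^ Fintype.card ι
  set K : ℝ → ℝ → ℝ := fun r s ↦ |c * exp (-r ^ 2 / (2 * σ ^ 2)) - c * exp (-s ^ 2 / (2 * σ ^ 2))|
  have h_radial (μ ν : ι → ℝ) :
      ∫ x : ι → ℝ, |∏ i, gaussPdf (μ i) σ (x i) - ∏ i, gaussPdf (ν i) σ (x i)| =
        ∫ z, K ‖z - WithLp.toLp 2 μ‖ ‖z - WithLp.toLp 2 ν‖ := by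
    simp only [prod_gaussPdf]
    exact h_toLp fun z ↦ K ‖z - WithLp.toLp 2 μ‖ ‖z - WithLp.toLp 2 ν‖
  rw [h_radial, h_radial, integral_comp_norm_sub_norm_sub_eq K h_norm]

lemma prod_gaussPdf_single {ι : Type*} [Fintype ι] [DecidableEq ι] (i₀ : ι) (a σ : ℝ)
    (x : ι → ℝ) :
    ∏ i, gaussPdf ((Pi.single i₀ a : ι → ℝ) i) σ (x i) =
      gaussPdf a σ (x i₀) * ∏ i ∈ {i₀}ᶜ, gaussPdf 0 σ (x i) := by
  rw [Fintype.prod_eq_mul_prod_compl i₀, Pi.single_eq_same]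
  congr 1
  refine Finset.prod_congr rfl fun i hi ↦ ?_
  rw [Pi.single_eq_of_ne (by simpa using hi)]

lemma integral_abs_sub_prod_gaussPdf_single {ι : Type*} [Fintype ι] [DecidableEq ι] (i₀ : ι)
    {σ : ℝ} (hσ : σ ≠ 0) (a b : ℝ) :
    ∫ x : ι → ℝ, |∏ i, gaussPdf ((Pi.single i₀ a : ι → ℝ) i) σ (x i) -
        ∏ i, gaussPdf ((Pi.single i₀ b : ι → ℝ) i) σ (x i)| =
      ∫ t, |gaussPdf a σ t - gaussPdf b σ t| := by
  set F : ι → ℝ → ℝ :=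
    Function.update (fun _ ↦ gaussPdf 0 σ) i₀ fun t ↦ |gaussPdf a σ t - gaussPdf b σ t|
  have hF (x : ι → ℝ) : |∏ i, gaussPdf ((Pi.single i₀ a : ι → ℝ) i) σ (x i) -
      ∏ i, gaussPdf ((Pi.single i₀ b : ι → ℝ) i) σ (x i)| = ∏ i, F i (x i) := by
    rw [prod_gaussPdf_single, prod_gaussPdf_single, ← sub_mul, abs_mul,
      abs_of_nonneg (Finset.prod_nonneg fun i _ ↦ gaussPdf_nonneg _ _ _),
      Fintype.prod_eq_mul_prod_compl i₀]
    congr 1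
    · simp [F]
    · refine Finset.prod_congr rfl fun i hi ↦ ?_
      simp [F, show i ≠ i₀ by simpa using hi]
  simp only [hF]
  rw [integral_fintype_prod_volume_eq_prod, Fintype.prod_eq_mul_prod_compl i₀,
    Finset.prod_eq_one fun i hi ↦ ?_, mul_one]
  · simp [F]
  · simp [F, show i ≠ i₀ by simpa using hi, integral_gaussPdf 0 hσ]

/-- The total variation distance between `N(μ₁, σ² I_d)` and `N(μ₂, σ² I_d)`, i.e., half
the `L¹` distance of their densities, equals `∫_{-α/(2σ)}^{α/(2σ)} g(x; 0, 1) dx` where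
`α = ‖μ₁ - μ₂‖₂`. -/
theorem gaussian_tv_eq (d : ℕ) (hd : 1 ≤ d) (σ : ℝ) (hσ : 0 < σ) (μ₁ μ₂ : Fin d → ℝ) :
    (1 / 2) * ∫ x : Fin d → ℝ,
        |(∏ i, gaussPdf (μ₁ i) σ (x i)) - ∏ i, gaussPdf (μ₂ i) σ (x i)| =
      ∫ x in (-(Real.sqrt (∑ i, (μ₁ i - μ₂ i) ^ 2) / (2 * σ)))..
          (Real.sqrt (∑ i, (μ₁ i - μ₂ i) ^ 2) / (2 * σ)), gaussPdf 0 1 x := by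
  set α := √(∑ i, (μ₁ i - μ₂ i) ^ 2)
  set i₀ : Fin d := ⟨0, hd⟩
  have h_dist : ∑ i, ((Pi.single i₀ (α / 2) : Fin d → ℝ) i -
      (Pi.single i₀ (-(α / 2)) : Fin d → ℝ) i) ^ 2 = ∑ i, (μ₁ i - μ₂ i) ^ 2 := by
    rw [Fintype.sum_eq_single i₀ fun i hi ↦ by simp [hi], Pi.single_eq_same, Pi.single_eq_same,
      sub_neg_eq_add, add_halves, Real.sq_sqrt (Finset.sum_nonneg fun i _ ↦ sq_nonneg _)]
  rw [integral_abs_sub_prod_gaussPdf_congr σ h_dist,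
    integral_abs_sub_prod_gaussPdf_single i₀ hσ.ne',
    integral_abs_gaussPdf_sub_gaussPdf_neg hσ (Real.sqrt_nonneg _)]
  ring
end

section
/- Let X and Y be sets, d a pseudometric on Y bounded by D_b > 0 (i.e., d(y, y') ≤ D_b for all y, y' ∈ Y), and F a set of functions from X to Y. Fix β > 0, an integer T ≥ 1, points x₁, …, x_T ∈ X, and arbitrary functions f̂₁, …, f̂_T ∈ F, and define for each t the version space F_t = { f ∈ F : Σ_{s=1}^{t−1} d(f(x_s), f̂_t(x_s))² ≤ β }. Let Δ satisfy 0 < Δ ≤ D_b and assume D_b ≤ √(T·β). Suppose D ∈ ℕ is such that every finite sequence z₁, …, z_n of elements of X, for which there exists ε' ≥ Δ such that each z_i is ℓ₁-norm ε'-independent of its predecessors with respect to F and d, satisfies n ≤ D. Then Σ_{t=1}^T sup_{f, f' ∈ F_t} d(f(x_t), f'(x_t)) ≤ Δ·T + 3·√(T·β)·D·log(D_b/Δ). -/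
open Finset

/-! Auxiliary machinery: a greedy bucket assignment for the eluder-dimension
counting argument. -/

open Classical in
noncomputable def bucketAux (S : Finset ℕ) (Ind : ℕ → Finset ℕ → Prop) : ℕ → ℕ → ℕ
  | 0, _ => 0
  | (n+1), t =>
    if t = n then
      (if h : ∃ j, Ind n (((Finset.range n) ∩ S).filter (fun s => bucketAux S Ind n s = j))
       then Nat.find h else 0)
    else bucketAux S Ind n t

noncomputable def bucket (S : Finset ℕ) (Ind : ℕ → Finset ℕ → Prop) (t : ℕ) : ℕ :=
  bucketAux S Ind (t+1) t

lemma bucketAux_stable (S : Finset ℕ) (Ind : ℕ → Finset ℕ → Prop) :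
    ∀ m t, t < m → bucketAux S Ind m t = bucket S Ind t := by
  intro m
  induction m with
  | zero => omega
  | succ n ih =>
    intro t ht
    rcases Nat.lt_succ_iff_lt_or_eq.mp ht with h | h
    · rw [bucketAux, if_neg (by omega)]
      exact ih t h
    · subst h; rfl

open Classical in
noncomputable def prevB (S : Finset ℕ) (Ind : ℕ → Finset ℕ → Prop) (t j : ℕ) : Finset ℕ :=
  ((Finset.range t) ∩ S).filter (fun s => bucket S Ind s = j)

open Classical in
lemma bucket_spec (S : Finset ℕ) (Ind : ℕ → Finset ℕ → Prop) (t : ℕ)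
    (h : ∃ j, Ind t (prevB S Ind t j)) :
    Ind t (prevB S Ind t (bucket S Ind t)) ∧
      ∀ j < bucket S Ind t, ¬ Ind t (prevB S Ind t j) := by
  have hset : ∀ j, ((Finset.range t) ∩ S).filter (fun s => bucketAux S Ind t s = j)
      = prevB S Ind t j := by
    intro j
    apply Finset.filter_congr
    intro s hs
    rw [bucketAux_stable S Ind t s (Finset.mem_range.mp (Finset.mem_inter.mp hs).1)]
  have h' : ∃ j, Ind t (((Finset.range t) ∩ S).filter (fun s => bucketAux S Ind t s = j)) := by
    obtain ⟨j, hj⟩ := h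
    exact ⟨j, by rw [hset j]; exact hj⟩
  have hb : bucket S Ind t = Nat.find h' := by
    rw [bucket, bucketAux, if_pos rfl, dif_pos h']
  constructor
  · have := Nat.find_spec h'
    rw [hset] at this
    rwa [hb]
  · intro j hj
    rw [hb] at hj
    have := Nat.find_min h' hj
    rwa [hset] at this

open Classical in
lemma eluder_count (S : Finset ℕ) (Ind : ℕ → Finset ℕ → Prop) (D K : ℕ)
    (hEmpty : ∀ t ∈ S, Ind t ∅)
    (hdep : ∀ t ∈ S, ∀ B : ℕ → Finset ℕ, (∀ j, B j ⊆ (Finset.range t) ∩ S) →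
        (∀ j₁ j₂, j₁ ≠ j₂ → Disjoint (B j₁) (B j₂)) →
        (∀ j < K, ¬ Ind t (B j)) → False)
    (hchain : ∀ B ⊆ S, (∀ t ∈ B, Ind t (B.filter (· < t))) → B.card ≤ D) :
    S.card ≤ K * D := by
  set bkt := bucket S Ind with hbkt
  have hex : ∀ t ∈ S, ∃ j, Ind t (prevB S Ind t j) := by
    intro t ht
    refine ⟨((Finset.range t) ∩ S).sup bkt + 1, ?_⟩
    have : prevB S Ind t (((Finset.range t) ∩ S).sup bkt + 1) = ∅ := by
      rw [prevB, Finset.filter_eq_empty_iff]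
      intro s hs hcon
      have := Finset.le_sup (f := bkt) hs
      simp only [← hbkt] at hcon
      omega
    rw [this]
    exact hEmpty t ht
  have hspec := fun t ht => bucket_spec S Ind t (hex t ht)
  have hlt : ∀ t ∈ S, bkt t < K := by
    intro t ht
    by_contra hcon
    push_neg at hcon
    refine hdep t ht (fun j => prevB S Ind t j) (fun j => Finset.filter_subset _ _)
      (fun j₁ j₂ hne => ?_) (fun j hj => (hspec t ht).2 j (lt_of_lt_of_le hj hcon))
    refine Finset.disjoint_left.mpr ?_
    intro s hs1 hs2
    simp only [prevB, Finset.mem_filter] at hs1 hs2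
    exact hne (hs1.2.symm.trans hs2.2)
  have hfib : ∀ j, (S.filter (fun s => bkt s = j)).card ≤ D := by
    intro j
    apply hchain _ (Finset.filter_subset _ _)
    intro t ht
    obtain ⟨htS, htj⟩ := Finset.mem_filter.mp ht
    have h1 := (hspec t htS).1
    have : prevB S Ind t (bkt t) = (S.filter (fun s => bkt s = j)).filter (· < t) := by
      ext s
      simp only [prevB, Finset.mem_filter, Finset.mem_inter, Finset.mem_range, htj]
      tauto
    rwa [this] at h1
  calc S.card = ∑ j ∈ Finset.range K, (S.filter (fun s => bkt s = j)).card :=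
        Finset.card_eq_sum_card_fiberwise (fun t ht => Finset.mem_range.mpr (hlt t ht))
    _ ≤ ∑ _j ∈ Finset.range K, D := Finset.sum_le_sum (fun j _ => hfib j)
    _ = K * D := by simp [Finset.sum_const, mul_comm]

lemma sum_Iio_fin {M : Type*} [AddCommMonoid M] {T : ℕ} (t : Fin T) (ψ : Fin T → M) (φ : ℕ → M)
    (h : ∀ s : Fin T, s < t → φ s.val = ψ s) :
    ∑ s ∈ Finset.range t.val, φ s = ∑ s ∈ Finset.Iio t, ψ s := by
  refine Finset.sum_bij'
    (i := fun (s : ℕ) (hs : s ∈ Finset.range t.val) =>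
      (⟨s, lt_trans (Finset.mem_range.mp hs) t.isLt⟩ : Fin T))
    (j := fun (s : Fin T) _ => s.val) ?_ ?_ ?_ ?_ ?_
  · intro a ha
    simp only [Finset.mem_Iio]
    exact Fin.mk_lt_of_lt_val (Finset.mem_range.mp ha)
  · intro a ha
    exact Finset.mem_range.mpr (by exact_mod_cast Finset.mem_Iio.mp ha)
  · intro a ha; rfl
  · intro a ha; rfl
  · intro a ha
    exact h _ (Fin.mk_lt_of_lt_val (Finset.mem_range.mp ha))

/-- Cumulative version-space width bound: with `d` bounded by `D_b`, version spaces
`F_t = { f ∈ F : ∑_{s<t} d(f(x_s), f̂_t(x_s))² ≤ β }`, `0 < Δ ≤ D_b ≤ √(T β)`, and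
ℓ₁-norm eluder dimension of `F` at scale `Δ` at most `D`, we have
`∑_{t=1}^T sup_{f,f' ∈ F_t} d(f(x_t), f'(x_t)) ≤ Δ T + 3 √(T β) D log (D_b/Δ)`. -/
theorem eluder_sum_of_widths {X Y : Type*} (dist : Y → Y → ℝ) (Db : ℝ) (hDb : 0 < Db)
    (hd_nonneg : ∀ y y', 0 ≤ dist y y')
    (hd_self : ∀ y, dist y y = 0)
    (hd_symm : ∀ y y', dist y y' = dist y' y)
    (hd_tri : ∀ y₁ y₂ y₃, dist y₁ y₃ ≤ dist y₁ y₂ + dist y₂ y₃)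
    (hd_bdd : ∀ y y', dist y y' ≤ Db)
    (F : Set (X → Y)) (β : ℝ) (hβ : 0 < β)
    (T : ℕ) (hT : 1 ≤ T) (x : Fin T → X) (fhat : Fin T → X → Y) (hfhat : ∀ t, fhat t ∈ F)
    (Δ : ℝ) (hΔ : 0 < Δ) (hΔDb : Δ ≤ Db) (hDbTβ : Db ≤ Real.sqrt (T * β))
    (D : ℕ)
    (hdim : ∀ (n : ℕ) (z : Fin n → X),
      (∃ ε' : ℝ, Δ ≤ ε' ∧ ∀ i : Fin n, ∃ f ∈ F, ∃ f' ∈ F,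
        (∑ j ∈ Finset.Iio i, dist (f (z j)) (f' (z j)) ≤ ε') ∧
        ε' < dist (f (z i)) (f' (z i))) → n ≤ D) :
    ∑ t : Fin T,
        sSup {r : ℝ | ∃ f ∈ F, ∃ f' ∈ F,
          (∑ s ∈ Finset.Iio t, dist (f (x s)) (fhat t (x s)) ^ 2 ≤ β) ∧
          (∑ s ∈ Finset.Iio t, dist (f' (x s)) (fhat t (x s)) ^ 2 ≤ β) ∧
          r = dist (f (x t)) (f' (x t))} ≤
      Δ * T + 3 * Real.sqrt (T * β) * D * Real.log (Db / Δ) := by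
  classical
  set Wset : Fin T → Set ℝ := fun t => {r : ℝ | ∃ f ∈ F, ∃ f' ∈ F,
      (∑ s ∈ Finset.Iio t, dist (f (x s)) (fhat t (x s)) ^ 2 ≤ β) ∧
      (∑ s ∈ Finset.Iio t, dist (f' (x s)) (fhat t (x s)) ^ 2 ≤ β) ∧
      r = dist (f (x t)) (f' (x t))} with hWset
  set W : Fin T → ℝ := fun t => sSup (Wset t) with hWdef
  show ∑ t : Fin T, W t ≤ Δ * T + 3 * Real.sqrt (T * β) * D * Real.log (Db / Δ)
  have hTβ : (0:ℝ) ≤ (T:ℝ) * β := by positivity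
  set L : ℝ := 2 * Real.sqrt ((T:ℝ) * β) with hLdef
  have hL : 0 ≤ L := by positivity
  have hL4 : L ^ 2 = 4 * ((T:ℝ) * β) := by
    rw [hLdef, mul_pow, Real.sq_sqrt hTβ]; ring
  -- basic facts about the width sets
  have hmem0 : ∀ t, (0:ℝ) ∈ Wset t := by
    intro t
    exact ⟨fhat t, hfhat t, fhat t, hfhat t, by simp [hd_self, hβ.le],
      by simp [hd_self, hβ.le], (hd_self _).symm⟩
  have hbddW : ∀ t, ∀ r ∈ Wset t, r ≤ Db := by
    rintro t r ⟨f, _, f', _, _, _, rfl⟩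
    exact hd_bdd _ _
  have hWle : ∀ t, W t ≤ Db := fun t => Real.sSup_le (hbddW t) hDb.le
  have hWge : ∀ t, 0 ≤ W t := fun t => le_csSup ⟨Db, fun r hr => hbddW t r hr⟩ (hmem0 t)
  -- extraction of near-optimal witnesses, with ℓ₁ control on the history
  have hext : ∀ t : Fin T, ∀ ε : ℝ, ε < W t → ∃ f ∈ F, ∃ f' ∈ F,
      (∑ s ∈ Finset.Iio t, dist (f (x s)) (f' (x s)) ≤ L) ∧
      ε < dist (f (x t)) (f' (x t)) := by
    intro t ε hlt
    obtain ⟨r, hr, hεr⟩ := exists_lt_of_lt_csSup ⟨0, hmem0 t⟩ hlt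
    obtain ⟨f, hf, f', hf', h1, h2, rfl⟩ := hr
    refine ⟨f, hf, f', hf', ?_, hεr⟩
    set A := ∑ s ∈ Finset.Iio t,
      (dist (f (x s)) (fhat t (x s)) + dist (f' (x s)) (fhat t (x s))) with hA
    have h3 : ∑ s ∈ Finset.Iio t, dist (f (x s)) (f' (x s)) ≤ A := by
      apply Finset.sum_le_sum
      intro s _
      calc dist (f (x s)) (f' (x s))
          ≤ dist (f (x s)) (fhat t (x s)) + dist (fhat t (x s)) (f' (x s)) := hd_tri _ _ _
        _ = dist (f (x s)) (fhat t (x s)) + dist (f' (x s)) (fhat t (x s)) := by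
            rw [hd_symm (fhat t (x s))]
    have h4 : A ^ 2 ≤ (Finset.Iio t).card * ∑ s ∈ Finset.Iio t,
        (dist (f (x s)) (fhat t (x s)) + dist (f' (x s)) (fhat t (x s))) ^ 2 :=
      sq_sum_le_card_mul_sum_sq
    have h5 : ∑ s ∈ Finset.Iio t,
        (dist (f (x s)) (fhat t (x s)) + dist (f' (x s)) (fhat t (x s))) ^ 2 ≤ 4 * β := by
      calc ∑ s ∈ Finset.Iio t,
          (dist (f (x s)) (fhat t (x s)) + dist (f' (x s)) (fhat t (x s))) ^ 2
          ≤ ∑ s ∈ Finset.Iio t,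
            (2 * dist (f (x s)) (fhat t (x s)) ^ 2 + 2 * dist (f' (x s)) (fhat t (x s)) ^ 2) := by
            apply Finset.sum_le_sum; intro s _
            nlinarith [sq_nonneg (dist (f (x s)) (fhat t (x s)) - dist (f' (x s)) (fhat t (x s)))]
        _ = 2 * ∑ s ∈ Finset.Iio t, dist (f (x s)) (fhat t (x s)) ^ 2
            + 2 * ∑ s ∈ Finset.Iio t, dist (f' (x s)) (fhat t (x s)) ^ 2 := by
            rw [Finset.sum_add_distrib, Finset.mul_sum, Finset.mul_sum]
        _ ≤ 4 * β := by linarith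
    have hcard : ((Finset.Iio t).card : ℝ) ≤ T := by
      have := Finset.card_le_univ (Finset.Iio t)
      simp only [Finset.card_univ, Fintype.card_fin] at this
      exact_mod_cast this
    have hsumnn : (0:ℝ) ≤ ∑ s ∈ Finset.Iio t,
        (dist (f (x s)) (fhat t (x s)) + dist (f' (x s)) (fhat t (x s))) ^ 2 :=
      Finset.sum_nonneg fun s _ => sq_nonneg _
    have hA2 : A ^ 2 ≤ L ^ 2 := by
      rw [hL4]
      calc A ^ 2 ≤ ((Finset.Iio t).card : ℝ) * ∑ s ∈ Finset.Iio t,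
          (dist (f (x s)) (fhat t (x s)) + dist (f' (x s)) (fhat t (x s))) ^ 2 := h4
        _ ≤ (T:ℝ) * (4 * β) := mul_le_mul hcard h5 hsumnn (by positivity)
        _ = 4 * ((T:ℝ) * β) := by ring
    have hAnn : 0 ≤ A := Finset.sum_nonneg fun s _ =>
      add_nonneg (hd_nonneg _ _) (hd_nonneg _ _)
    nlinarith [h3]
  -- counting: at any scale ε ≥ Δ, few widths exceed ε
  have hcount : ∀ ε : ℝ, Δ ≤ ε →
      ((Finset.univ.filter (fun t : Fin T => ε < W t)).card : ℝ) ≤ (L/ε + 1) * D := by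
    intro ε hΔε
    have hε : 0 < ε := lt_of_lt_of_le hΔ hΔε
    set x' : ℕ → X := fun n => if h : n < T then x ⟨n, h⟩ else x ⟨0, hT⟩ with hx'
    have hx'eq : ∀ (s : Fin T), x' s.val = x s := by
      intro s; simp only [hx', s.isLt, dif_pos, Fin.eta]
    set S : Finset ℕ := (Finset.univ.filter (fun t : Fin T => ε < W t)).image Fin.val with hS
    set Ind : ℕ → Finset ℕ → Prop := fun n B => ∃ f ∈ F, ∃ f' ∈ F,
      (∑ s ∈ B, dist (f (x' s)) (f' (x' s)) ≤ ε) ∧ ε < dist (f (x' n)) (f' (x' n)) with hInd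
    set K : ℕ := ⌊L/ε⌋₊ + 1 with hK
    have hmemS : ∀ n, n ∈ S ↔ ∃ hn : n < T, ε < W ⟨n, hn⟩ := by
      intro n
      simp only [hS, Finset.mem_image, Finset.mem_filter, Finset.mem_univ, true_and]
      constructor
      · rintro ⟨t, ht, rfl⟩; exact ⟨t.isLt, by simpa using ht⟩
      · rintro ⟨hn, h⟩; exact ⟨⟨n, hn⟩, h, rfl⟩
    have hScount : S.card ≤ K * D := by
      apply eluder_count S Ind D K
      · -- hEmpty
        intro t ht
        obtain ⟨hn, hw⟩ := (hmemS t).mp ht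
        obtain ⟨f, hf, f', hf', _, hd⟩ := hext ⟨t, hn⟩ ε hw
        exact ⟨f, hf, f', hf', by simp [hε.le], by rwa [show x' t = x ⟨t, hn⟩ from hx'eq ⟨t, hn⟩]⟩
      · -- hdep
        intro t ht B hsub hdisj hnind
        obtain ⟨hn, hw⟩ := (hmemS t).mp ht
        set tF : Fin T := ⟨t, hn⟩ with htF
        obtain ⟨f, hf, f', hf', hsum, hd⟩ := hext tF ε hw
        have hd' : ε < dist (f (x' t)) (f' (x' t)) := by rwa [show x' t = x tF from hx'eq tF]
        have hBj : ∀ j < K, ε < ∑ s ∈ B j, dist (f (x' s)) (f' (x' s)) := by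
          intro j hj
          by_contra hcon
          push_neg at hcon
          exact hnind j hj ⟨f, hf, f', hf', hcon, hd'⟩
        have hsum' : ∑ s ∈ Finset.range t, dist (f (x' s)) (f' (x' s)) ≤ L := by
          rw [sum_Iio_fin tF (fun s => dist (f (x s)) (f' (x s)))
            (fun n => dist (f (x' n)) (f' (x' n)))
            (fun s hs => by show dist (f (x' s.val)) (f' (x' s.val)) = _; rw [hx'eq s])]
          exact hsum
        have hdisj' : (↑(Finset.range K) : Set ℕ).PairwiseDisjoint B := by
          intro j₁ _ j₂ _ hne
          exact hdisj j₁ j₂ hne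
        have hKε : (K:ℝ) * ε < L := by
          calc (K:ℝ) * ε = ∑ _j ∈ Finset.range K, ε := by
                rw [Finset.sum_const, Finset.card_range, nsmul_eq_mul]
            _ < ∑ j ∈ Finset.range K, ∑ s ∈ B j, dist (f (x' s)) (f' (x' s)) := by
                apply Finset.sum_lt_sum_of_nonempty ⟨0, Finset.mem_range.mpr (by omega)⟩
                intro j hj
                exact hBj j (Finset.mem_range.mp hj)
            _ = ∑ s ∈ (Finset.range K).biUnion B, dist (f (x' s)) (f' (x' s)) :=
                (Finset.sum_biUnion hdisj').symm
            _ ≤ ∑ s ∈ Finset.range t, dist (f (x' s)) (f' (x' s)) := by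
                apply Finset.sum_le_sum_of_subset_of_nonneg
                · intro s hs
                  obtain ⟨j, _, hsB⟩ := Finset.mem_biUnion.mp hs
                  exact (Finset.mem_inter.mp (hsub j hsB)).1
                · intro s _ _; exact hd_nonneg _ _
            _ ≤ L := hsum'
        have : L < (K:ℝ) * ε := by
          have h1 : L / ε < (K:ℝ) := by
            rw [hK]; push_cast
            exact Nat.lt_floor_add_one _
          calc L = (L / ε) * ε := by field_simp
            _ < (K:ℝ) * ε := mul_lt_mul_of_pos_right h1 hε
        linarith
      · -- hchain
        intro B hBS hind
        apply hdim B.card (fun i => x' ((B.orderIsoOfFin rfl i : ℕ)))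
        refine ⟨ε, hΔε, ?_⟩
        intro i
        set iso := B.orderIsoOfFin rfl with hiso
        set t : ℕ := (iso i : ℕ) with ht
        have htB : t ∈ B := (iso i).2
        obtain ⟨f, hf, f', hf', hsum, hd⟩ := hind t htB
        refine ⟨f, hf, f', hf', ?_, hd⟩
        have : ∑ j ∈ Finset.Iio i, dist (f (x' (iso j : ℕ))) (f' (x' (iso j : ℕ)))
            = ∑ s ∈ B.filter (· < t), dist (f (x' s)) (f' (x' s)) := by
          apply Finset.sum_bij (i := fun j _ => (iso j : ℕ))
          · intro j hj
            refine Finset.mem_filter.mpr ⟨(iso j).2, ?_⟩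
            have : iso j < iso i := iso.lt_iff_lt.mpr (Finset.mem_Iio.mp hj)
            exact_mod_cast this
          · intro j₁ _ j₂ _ h
            exact iso.injective (Subtype.ext h)
          · intro s hs
            obtain ⟨hsB, hst⟩ := Finset.mem_filter.mp hs
            refine ⟨iso.symm ⟨s, hsB⟩, ?_, ?_⟩
            · apply Finset.mem_Iio.mpr
              rw [← iso.symm_apply_apply i]
              apply iso.symm.lt_iff_lt.mpr
              exact_mod_cast hst
            · simp
          · intro j hj; rfl
        rw [this]
        exact hsum
    have hcard_eq : S.card = (Finset.univ.filter (fun t : Fin T => ε < W t)).card := by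
      rw [hS]; exact Finset.card_image_of_injective _ Fin.val_injective
    rw [← hcard_eq]
    calc (S.card : ℝ) ≤ ((K * D : ℕ) : ℝ) := by exact_mod_cast hScount
      _ = ((⌊L/ε⌋₊ : ℝ) + 1) * D := by rw [hK]; push_cast; ring
      _ ≤ (L/ε + 1) * D := by
          apply mul_le_mul_of_nonneg_right _ (Nat.cast_nonneg D)
          have := Nat.floor_le (div_nonneg hL hε.le)
          linarith
  -- integral step
  have hintegral : ∑ t : Fin T, W t
      ≤ Δ * T + ((D:ℝ) * (Db - Δ) + L * D * Real.log (Db / Δ)) := by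
    set χ : Fin T → ℝ → ℝ := fun t ε => if ε < W t then 1 else 0 with hχ
    have hχanti : ∀ t, Antitone (χ t) := by
      intro t a b hab
      simp only [hχ]
      split_ifs with h1 h2 <;> norm_num
      exact absurd (lt_of_le_of_lt hab h1) h2
    have hχint : ∀ (t : Fin T) (a b : ℝ), IntervalIntegrable (χ t) MeasureTheory.volume a b :=
      fun t a b => (hχanti t).intervalIntegrable
    have hχnn : ∀ t ε, 0 ≤ χ t ε := by
      intro t ε; simp only [hχ]; split_ifs <;> norm_num
    have hWbound : ∀ t, W t ≤ Δ + ∫ ε in Δ..Db, χ t ε := by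
      intro t
      rcases le_or_gt (W t) Δ with h | h
      · have : 0 ≤ ∫ ε in Δ..Db, χ t ε :=
          intervalIntegral.integral_nonneg hΔDb (fun u _ => hχnn t u)
        linarith
      · have hsplit : (∫ ε in Δ..(W t), χ t ε) + (∫ ε in (W t)..Db, χ t ε)
            = ∫ ε in Δ..Db, χ t ε :=
          intervalIntegral.integral_add_adjacent_intervals (hχint t _ _) (hχint t _ _)
        have h2 : 0 ≤ ∫ ε in (W t)..Db, χ t ε :=
          intervalIntegral.integral_nonneg (hWle t) (fun u _ => hχnn t u)
        have h1 : (∫ ε in Δ..(W t), χ t ε) = W t - Δ := by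
          have hcongr : ∀ᵐ u ∂(MeasureTheory.volume), u ∈ Set.uIoc Δ (W t) →
              χ t u = (fun _ => (1:ℝ)) u := by
            rw [MeasureTheory.ae_iff]
            refine MeasureTheory.measure_mono_null ?_ (MeasureTheory.measure_singleton (W t))
            intro u hu
            simp only [Set.mem_setOf_eq, _root_.not_imp] at hu
            obtain ⟨hu1, hu2⟩ := hu
            rw [Set.uIoc_of_le h.le] at hu1
            have : ¬ (u < W t) := by
              intro hc; exact hu2 (by simp [hχ, hc])
            have := le_antisymm hu1.2 (not_lt.mp this)
            simp [this]
          rw [intervalIntegral.integral_congr_ae hcongr]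
          simp
        linarith
    have hsum : ∑ t : Fin T, W t ≤ Δ * T + ∫ ε in Δ..Db, (∑ t : Fin T, χ t ε) := by
      have h1 : ∑ t : Fin T, W t ≤ ∑ t : Fin T, (Δ + ∫ ε in Δ..Db, χ t ε) :=
        Finset.sum_le_sum fun t _ => hWbound t
      have h2 : ∑ t : Fin T, (Δ + ∫ ε in Δ..Db, χ t ε)
          = Δ * T + ∑ t : Fin T, ∫ ε in Δ..Db, χ t ε := by
        rw [Finset.sum_add_distrib, Finset.sum_const, Finset.card_univ, Fintype.card_fin,
          nsmul_eq_mul, mul_comm]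
      have h3 : ∑ t : Fin T, ∫ ε in Δ..Db, χ t ε
          = ∫ ε in Δ..Db, (∑ t : Fin T, χ t ε) :=
        (intervalIntegral.integral_finset_sum (fun t _ => hχint t Δ Db)).symm
      linarith [h1, h2.le, h3.le]
    have hNanti : Antitone (fun ε => ∑ t : Fin T, χ t ε) := by
      intro a b hab
      exact Finset.sum_le_sum fun t _ => hχanti t hab
    have hNint : IntervalIntegrable (fun ε => ∑ t : Fin T, χ t ε) MeasureTheory.volume Δ Db :=
      hNanti.intervalIntegrable
    have h0uIcc : (0:ℝ) ∉ Set.uIcc Δ Db := by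
      rw [Set.uIcc_of_le hΔDb]
      intro hc
      exact absurd (Set.mem_Icc.mp hc).1 (not_le.mpr hΔ)
    have hinvcont : ContinuousOn (fun ε : ℝ => 1/ε) (Set.uIcc Δ Db) := by
      apply ContinuousOn.div continuousOn_const continuousOn_id
      intro u hu hc
      exact h0uIcc (hc ▸ hu)
    have hinvint : IntervalIntegrable (fun ε : ℝ => 1/ε) MeasureTheory.volume Δ Db :=
      hinvcont.intervalIntegrable
    have hφint : IntervalIntegrable (fun ε : ℝ => (D:ℝ) + L * D * (1/ε))
        MeasureTheory.volume Δ Db :=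
      (intervalIntegrable_const (c := (D:ℝ))).add (hinvint.const_mul _)
    have hptwise : ∀ ε ∈ Set.Icc Δ Db, (∑ t : Fin T, χ t ε) ≤ (D:ℝ) + L * D * (1/ε) := by
      intro ε hε
      have hΔε : Δ ≤ ε := hε.1
      have hεpos : 0 < ε := lt_of_lt_of_le hΔ hΔε
      have : (∑ t : Fin T, χ t ε)
          = ((Finset.univ.filter (fun t : Fin T => ε < W t)).card : ℝ) := by
        simp only [hχ, Finset.sum_boole]
      rw [this]
      calc ((Finset.univ.filter (fun t : Fin T => ε < W t)).card : ℝ)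
          ≤ (L/ε + 1) * D := hcount ε hΔε
        _ = (D:ℝ) + L * D * (1/ε) := by field_simp; ring
    have hmono : (∫ ε in Δ..Db, (∑ t : Fin T, χ t ε))
        ≤ ∫ ε in Δ..Db, ((D:ℝ) + L * D * (1/ε)) :=
      intervalIntegral.integral_mono_on hΔDb hNint hφint hptwise
    have hφval : (∫ ε in Δ..Db, ((D:ℝ) + L * D * (1/ε)))
        = (D:ℝ) * (Db - Δ) + L * D * Real.log (Db / Δ) := by
      rw [intervalIntegral.integral_add (_root_.intervalIntegrable_const (c := (D:ℝ)))
        (hinvint.const_mul _), intervalIntegral.integral_const,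
        intervalIntegral.integral_const_mul, integral_one_div h0uIcc]
      simp [smul_eq_mul]
      ring
    linarith [hsum, hmono, hφval.le]
  -- final arithmetic
  have hlognn : 0 ≤ Real.log (Db / Δ) := Real.log_nonneg ((one_le_div hΔ).mpr hΔDb)
  have hlogge : 1 - Δ/Db ≤ Real.log (Db/Δ) := by
    have hx : 0 < Δ/Db := div_pos hΔ hDb
    have h := Real.log_le_sub_one_of_pos hx
    rw [Real.log_div hΔ.ne' hDb.ne'] at h
    rw [Real.log_div hDb.ne' hΔ.ne']
    have hΔDb' : Δ/Db ≤ 1 := (div_le_one hDb).mpr hΔDb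
    linarith
  have h1 : Db - Δ ≤ Real.sqrt ((T:ℝ) * β) * Real.log (Db/Δ) := by
    calc Db - Δ = Db * (1 - Δ/Db) := by field_simp
      _ ≤ Db * Real.log (Db/Δ) := mul_le_mul_of_nonneg_left hlogge hDb.le
      _ ≤ Real.sqrt ((T:ℝ) * β) * Real.log (Db/Δ) :=
          mul_le_mul_of_nonneg_right hDbTβ hlognn
  have h2 : (D:ℝ) * (Db - Δ)
      ≤ (D:ℝ) * (Real.sqrt ((T:ℝ) * β) * Real.log (Db/Δ)) :=
    mul_le_mul_of_nonneg_left h1 (Nat.cast_nonneg D)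
  have h3 : L * D * Real.log (Db/Δ) + (D:ℝ) * (Real.sqrt ((T:ℝ) * β) * Real.log (Db/Δ))
      = 3 * Real.sqrt ((T:ℝ) * β) * D * Real.log (Db / Δ) := by
    rw [hLdef]; ring
  linarith [hintegral, h2, h3.le]
end
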